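/- arXiv:1212.0609 — 2 statements merged into one kernel-verified Lean document; each statement's English description precedes it below -/
import Mathlib

section
/- Let A be a finite index set, s ∉ A, data as in the context, β_{s,t} ∈ ℝ for t ∈ A, Q a probability mass function on ∏_{t∈A} X_t, and define P(x_s, x_A) = π_s(x_s)·Q(x_A) + ζ_s(x_s) · ∑_{t∈A} (∏_{u∈A\{t}} π̂_u(x_u)) · β_{s,t} ζ_t(x_t). Fix t ∈ A and assume the marginal of Q at t is π_t. Then the covariance of the coordinates x_s and x_t under P equals β_{s,t}: ∑_{x_s, x_A} x_s x_t P(x_s, x_A) − (∑_{x∈X_s} x π_s(x))·(∑_{x∈X_t} x π_t(x)) = β_{s,t}. -/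
/-!
`P` is `π_s ⊗ Q` plus the perturbation `ζ_s · R`. Since `∑ x ζ_s(x) = 1`, the perturbation
contributes `∑ x_t R(x_A)` to the covariance, while the `π_s ⊗ Q` part contributes the product of
the means because the marginal of `Q` at `t` is `π_t`. In `R`, a summand of index `u ≠ t` is a
product weight whose `u`-th factor `ζ_u` has total mass `0`, so only the summand of index `t`
survives, and it gives `β_{s,t} ∑ x ζ_t(x) = β_{s,t}`.
-/

open Finset

/-- `μ̃`, the mean of the pmf `p` on the finite state space `X`. -/
noncomputable def muF (X : Finset ℝ) (p : ℝ → ℝ) : ℝ := ∑ x ∈ X, p x * x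

/-- `σ̃²`, the variance of the pmf `p` on `X`. -/
noncomputable def sig2F (X : Finset ℝ) (p : ℝ → ℝ) : ℝ := ∑ x ∈ X, p x * (x - muF X p) ^ 2

/-- `ζ(x) = π̃(x)(x − μ̃)/σ̃²`. -/
noncomputable def zetaF (X : Finset ℝ) (p : ℝ → ℝ) (x : ℝ) : ℝ :=
  p x * (x - muF X p) / sig2F X p

open Fintype

section Moments

variable (X : Finset ℝ) (p : ℝ → ℝ)

lemma sig2F_pos (hnn : ∀ x ∈ X, 0 ≤ p x) (hnd : 1 < (X.filter fun x => p x ≠ 0).card) :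
    0 < sig2F X p := by
  obtain ⟨a, ha, b, hb, hab⟩ := one_lt_card.mp hnd
  rw [mem_filter] at ha hb
  obtain ⟨c, ⟨hc, hpc⟩, hcm⟩ : ∃ c, (c ∈ X ∧ p c ≠ 0) ∧ c ≠ muF X p := by
    by_cases h : a = muF X p
    · exact ⟨b, hb, fun hb' => hab (hb'.trans h.symm).symm⟩
    · exact ⟨a, ha, h⟩
  refine sum_pos' (fun x hx => mul_nonneg (hnn x hx) (sq_nonneg _)) ⟨c, hc, ?_⟩
  exact mul_pos ((hnn c hc).lt_of_ne' hpc) (pow_two_pos_of_ne_zero (sub_ne_zero.mpr hcm))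

variable {X p}

lemma sum_mul_sub_muF_eq_zero (hsum : ∑ x ∈ X, p x = 1) : ∑ x ∈ X, p x * (x - muF X p) = 0 := by
  simp only [mul_sub, sum_sub_distrib, ← sum_mul, hsum, one_mul, muF, sub_self]

lemma sum_zetaF_eq_zero (hsum : ∑ x ∈ X, p x = 1) : ∑ x ∈ X, zetaF X p x = 0 := by
  simp only [zetaF, ← sum_div, sum_mul_sub_muF_eq_zero hsum, zero_div]

lemma sum_mul_zetaF_eq_one (hsum : ∑ x ∈ X, p x = 1) (hσ : sig2F X p ≠ 0) :
    ∑ x ∈ X, x * zetaF X p x = 1 := by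
  have hσ_eq : ∑ x ∈ X, x * (p x * (x - muF X p)) = sig2F X p := by
    calc ∑ x ∈ X, x * (p x * (x - muF X p))
        = sig2F X p + muF X p * ∑ x ∈ X, p x * (x - muF X p) := by
          rw [sig2F, mul_sum, ← sum_add_distrib]
          exact sum_congr rfl fun x _ => by ring
      _ = sig2F X p := by rw [sum_mul_sub_muF_eq_zero hsum, mul_zero, add_zero]
  simp only [zetaF, mul_div_assoc', ← sum_div, hσ_eq, div_self hσ]

end Moments

lemma sum_comp_mul_eq_of_fiber_sum {α β R : Type*} [DecidableEq β] [CommSemiring R]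
    {S : Finset α} {T : Finset β} {g : α → β} (hg : ∀ z ∈ S, g z ∈ T) {Q : α → R} {π : β → R}
    (hQ : ∀ y ∈ T, ∑ z ∈ S with g z = y, Q z = π y) (f : β → R) :
    ∑ z ∈ S, f (g z) * Q z = ∑ y ∈ T, f y * π y := by
  rw [← sum_fiberwise_of_maps_to hg]
  refine sum_congr rfl fun y hy => ?_
  rw [← hQ y hy, mul_sum]
  exact sum_congr rfl fun z hz => by rw [(mem_filter.mp hz).2]

section ProductWeights

variable {ι α R : Type*} [Fintype ι] [DecidableEq ι] [CommSemiring R]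
  (X : ι → Finset α) (ph : ι → α → R)

lemma prod_ite_eq_mul_prod_erase {M : Type*} [CommMonoid M] (t : ι) (a b : ι → M) :
    ∏ i, (if i = t then b i else a i) = b t * ∏ i ∈ univ.erase t, a i := by
  rw [← mul_prod_erase univ _ (mem_univ t), if_pos rfl]
  exact congrArg _ (prod_congr rfl fun i hi => if_neg (ne_of_mem_erase hi))

lemma sum_piFinset_prod_erase_mul (t : ι) (g : α → R) :
    ∑ x ∈ piFinset X, (∏ u ∈ univ.erase t, ph u (x u)) * g (x t) =
      (∏ u ∈ univ.erase t, ∑ y ∈ X u, ph u y) * ∑ y ∈ X t, g y := by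
  calc ∑ x ∈ piFinset X, (∏ u ∈ univ.erase t, ph u (x u)) * g (x t)
      = ∑ x ∈ piFinset X, ∏ i, (if i = t then g (x i) else ph i (x i)) :=
        sum_congr rfl fun x _ => by rw [prod_ite_eq_mul_prod_erase, mul_comm]
    _ = ∏ i, ∑ y ∈ X i, (if i = t then g y else ph i y) :=
        (prod_univ_sum X fun i y => if i = t then g y else ph i y).symm
    _ = _ := by simp only [sum_ite_irrel]; rw [prod_ite_eq_mul_prod_erase, mul_comm]

lemma sum_piFinset_mul_prod_erase_mul_eq_zero {t₀ t : ι} (hne : t₀ ≠ t) (f : α → R) {g : α → R}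
    (hg : ∑ y ∈ X t, g y = 0) :
    ∑ x ∈ piFinset X, f (x t₀) * ((∏ u ∈ univ.erase t, ph u (x u)) * g (x t)) = 0 := by
  have hweight : ∀ x : ι → α, f (x t₀) * ∏ u ∈ univ.erase t, ph u (x u) =
      ∏ u ∈ univ.erase t, (if u = t₀ then f (x u) else 1) * ph u (x u) := fun x => by
    rw [prod_mul_distrib, prod_ite_eq_of_mem' _ _ _ (mem_erase.mpr ⟨hne, mem_univ t₀⟩)]
  simp only [← mul_assoc, hweight]
  rw [sum_piFinset_prod_erase_mul X fun u y => (if u = t₀ then f y else 1) * ph u y, hg,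
    mul_zero]

end ProductWeights

lemma sum_piFinset_mul_sum_prod_erase_mul_zetaF {ι : Type*} [Fintype ι] [DecidableEq ι]
    (X : ι → Finset ℝ) (pt ph : ι → ℝ → ℝ) (β : ι → ℝ) (t₀ : ι)
    (hpt_sum : ∀ t, ∑ x ∈ X t, pt t x = 1) (hph_sum : ∀ t, ∑ x ∈ X t, ph t x = 1)
    (hσ : sig2F (X t₀) (pt t₀) ≠ 0) :
    ∑ x ∈ piFinset X, x t₀ *
      ∑ t, (∏ u ∈ univ.erase t, ph u (x u)) * β t * zetaF (X t) (pt t) (x t) = β t₀ := by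
  simp only [mul_sum, mul_assoc]
  rw [sum_comm, sum_eq_single_of_mem t₀ (mem_univ t₀)]
  · calc ∑ x ∈ piFinset X, x t₀ * ((∏ u ∈ univ.erase t₀, ph u (x u)) *
          (β t₀ * zetaF (X t₀) (pt t₀) (x t₀)))
        = ∑ x ∈ piFinset X, (∏ u ∈ univ.erase t₀, ph u (x u)) *
            (β t₀ * (x t₀ * zetaF (X t₀) (pt t₀) (x t₀))) :=
          sum_congr rfl fun x _ => by ring
      _ = β t₀ := by
          rw [sum_piFinset_prod_erase_mul X ph t₀ fun y => β t₀ * (y * zetaF (X t₀) (pt t₀) y),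
            ← mul_sum, sum_mul_zetaF_eq_one (hpt_sum t₀) hσ]
          simp [hph_sum]
  · intro t _ hne
    refine sum_piFinset_mul_prod_erase_mul_eq_zero X ph (Ne.symm hne) id
      (g := fun y => β t * zetaF (X t) (pt t) y) ?_
    rw [← mul_sum, sum_zetaF_eq_zero (hpt_sum t), mul_zero]

theorem stmt5_general {ι : Type*} [Fintype ι] [DecidableEq ι]
    -- data at the extra site `s` (not a member of the index set `ι` of `A`)
    (Xs : Finset ℝ) (πs pts : ℝ → ℝ)
    -- data at the sites of `A`
    (X : ι → Finset ℝ) (π pt ph : ι → ℝ → ℝ) (β : ι → ℝ)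
    (hpts_nn : ∀ x ∈ Xs, 0 ≤ pts x) (hpts_sum : ∑ x ∈ Xs, pts x = 1)
    (hpts_nd : 1 < (Xs.filter fun x => pts x ≠ 0).card)
    (hpt_nn : ∀ t, ∀ x ∈ X t, 0 ≤ pt t x) (hpt_sum : ∀ t, ∑ x ∈ X t, pt t x = 1)
    (hpt_nd : ∀ t, 1 < ((X t).filter fun x => pt t x ≠ 0).card)
    (hph_sum : ∀ t, ∑ x ∈ X t, ph t x = 1)
    -- `Q` is a pmf on `∏_{t ∈ A} X_t`
    (Q : (ι → ℝ) → ℝ)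
    -- the function `P`
    (P : ℝ → (ι → ℝ) → ℝ)
    (hP : ∀ xs xA, P xs xA = πs xs * Q xA +
      zetaF Xs pts xs *
        ∑ t, (∏ u ∈ Finset.univ.erase t, ph u (xA u)) * β t * zetaF (X t) (pt t) (xA t))
    -- a distinguished site `t₀ ∈ A` at which the marginal of `Q` is `π_{t₀}`
    (t₀ : ι)
    (hQmarg : ∀ y ∈ X t₀,
      ∑ xA ∈ (Fintype.piFinset X).filter (fun z => z t₀ = y), Q xA = π t₀ y) :
    -- the covariance of the coordinates at `s` and at `t₀` under `P` equals `β_{s,t₀}`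
    ∑ xs ∈ Xs, ∑ xA ∈ Fintype.piFinset X, xs * xA t₀ * P xs xA -
      (∑ x ∈ Xs, x * πs x) * (∑ x ∈ X t₀, x * π t₀ x) = β t₀ := by
  have hsplit : ∑ xs ∈ Xs, ∑ xA ∈ piFinset X, xs * xA t₀ * P xs xA =
      (∑ x ∈ Xs, x * πs x) * (∑ xA ∈ piFinset X, xA t₀ * Q xA) +
        (∑ xs ∈ Xs, xs * zetaF Xs pts xs) * ∑ xA ∈ piFinset X, xA t₀ *
          ∑ t, (∏ u ∈ univ.erase t, ph u (xA u)) * β t * zetaF (X t) (pt t) (xA t) := by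
    simp only [Finset.sum_mul_sum, ← sum_add_distrib, hP]
    exact sum_congr rfl fun xs _ => sum_congr rfl fun xA _ => by ring
  rw [hsplit, sum_comp_mul_eq_of_fiber_sum (fun x hx => mem_piFinset.mp hx t₀) hQmarg fun y => y,
    sum_mul_zetaF_eq_one hpts_sum (sig2F_pos Xs pts hpts_nn hpts_nd).ne',
    sum_piFinset_mul_sum_prod_erase_mul_zetaF X pt ph β t₀ hpt_sum hph_sum
      (sig2F_pos (X t₀) (pt t₀) (hpt_nn t₀) (hpt_nd t₀)).ne']
  ring

theorem stmt5 {ι : Type*} [Fintype ι] [DecidableEq ι]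
    -- data at the extra site `s` (not a member of the index set `ι` of `A`)
    (Xs : Finset ℝ) (πs pts phs : ℝ → ℝ)
    -- data at the sites of `A`
    (X : ι → Finset ℝ) (π pt ph : ι → ℝ → ℝ) (β : ι → ℝ)
    (hXsne : Xs.Nonempty)
    (hπs_pos : ∀ x ∈ Xs, 0 < πs x) (hπs_sum : ∑ x ∈ Xs, πs x = 1)
    (hpts_nn : ∀ x ∈ Xs, 0 ≤ pts x) (hpts_sum : ∑ x ∈ Xs, pts x = 1)
    (hpts_nd : 1 < (Xs.filter fun x => pts x ≠ 0).card)
    (hphs_nn : ∀ x ∈ Xs, 0 ≤ phs x) (hphs_sum : ∑ x ∈ Xs, phs x = 1)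
    (hXne : ∀ t, (X t).Nonempty)
    (hπ_pos : ∀ t, ∀ x ∈ X t, 0 < π t x) (hπ_sum : ∀ t, ∑ x ∈ X t, π t x = 1)
    (hpt_nn : ∀ t, ∀ x ∈ X t, 0 ≤ pt t x) (hpt_sum : ∀ t, ∑ x ∈ X t, pt t x = 1)
    (hpt_nd : ∀ t, 1 < ((X t).filter fun x => pt t x ≠ 0).card)
    (hph_nn : ∀ t, ∀ x ∈ X t, 0 ≤ ph t x) (hph_sum : ∀ t, ∑ x ∈ X t, ph t x = 1)
    -- `Q` is a pmf on `∏_{t ∈ A} X_t`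
    (Q : (ι → ℝ) → ℝ)
    (hQ_nn : ∀ xA ∈ Fintype.piFinset X, 0 ≤ Q xA)
    (hQ_sum : ∑ xA ∈ Fintype.piFinset X, Q xA = 1)
    -- the function `P`
    (P : ℝ → (ι → ℝ) → ℝ)
    (hP : ∀ xs xA, P xs xA = πs xs * Q xA +
      zetaF Xs pts xs *
        ∑ t, (∏ u ∈ Finset.univ.erase t, ph u (xA u)) * β t * zetaF (X t) (pt t) (xA t))
    -- a distinguished site `t₀ ∈ A` at which the marginal of `Q` is `π_{t₀}`
    (t₀ : ι)
    (hQmarg : ∀ y ∈ X t₀,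
      ∑ xA ∈ (Fintype.piFinset X).filter (fun z => z t₀ = y), Q xA = π t₀ y) :
    -- the covariance of the coordinates at `s` and at `t₀` under `P` equals `β_{s,t₀}`
    ∑ xs ∈ Xs, ∑ xA ∈ Fintype.piFinset X, xs * xA t₀ * P xs xA -
      (∑ x ∈ Xs, x * πs x) * (∑ x ∈ X t₀, x * π t₀ x) = β t₀ :=
  stmt5_general Xs πs pts X π pt ph β hpts_nn hpts_sum hpts_nd hpt_nn hpt_sum hpt_nd hph_sum Q P hP
    t₀ hQmarg
end

section
/- Let s and t be two indices with data as in the context, let c ∈ ℝ, and suppose W(x,y) = π_s(x)π_t(y) + ζ_s(x)·c·ζ_t(y) is nonnegative on X_s × X_t (hence a probability mass function with marginals π_s and π_t). Then for all x ∈ X_s and y ∈ X_t: −σ̃²_s σ̃²_t π_s(x)π_t(y) ≤ π̃_s(x)π̃_t(y)(x−μ̃_s)·c·(y−μ̃_t) ≤ σ̃²_s σ̃²_t (1−π_s(x))π_t(y). -/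
open Finset

lemma sig2_pos (X : Finset ℝ) (p : ℝ → ℝ) (hnn : ∀ x ∈ X, 0 ≤ p x)
    (hnd : 1 < (X.filter fun x => p x ≠ 0).card) : 0 < sig2F X p := by
  rcases Finset.one_lt_card.mp hnd with ⟨a, ha, b, hb, hab⟩
  simp only [Finset.mem_filter] at ha hb
  rcases lt_or_eq_of_le (Finset.sum_nonneg fun x hx =>
    mul_nonneg (hnn x hx) (sq_nonneg _)) with h | h
  · exact h
  exfalso
  have hz : ∀ x ∈ X, p x * (x - muF X p) ^ 2 = 0 := by
    intro x hx
    have := (Finset.sum_eq_zero_iff_of_nonneg (fun x hx =>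
      mul_nonneg (hnn x hx) (sq_nonneg _))).mp h.symm
    exact this x hx
  have hxa : a = muF X p := by
    have := hz a ha.1
    rcases mul_eq_zero.mp this with h1 | h2
    · exact absurd h1 ha.2
    · have := sq_eq_zero_iff.mp h2; linarith
  have hxb : b = muF X p := by
    have := hz b hb.1
    rcases mul_eq_zero.mp this with h1 | h2
    · exact absurd h1 hb.2
    · have := sq_eq_zero_iff.mp h2; linarith
  exact hab (hxa.trans hxb.symm)

lemma zeta_sum (X : Finset ℝ) (p : ℝ → ℝ) (hsum : ∑ x ∈ X, p x = 1) :
    ∑ x ∈ X, zetaF X p x = 0 := by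
  unfold zetaF
  rw [← Finset.sum_div]
  have : ∑ x ∈ X, p x * (x - muF X p) = 0 := by
    simp only [mul_sub]
    rw [Finset.sum_sub_distrib, ← Finset.sum_mul, hsum, one_mul]
    simp [muF]
  rw [this, zero_div]

theorem stmt8 (Xs Xt : Finset ℝ) (πs πt pts ptt : ℝ → ℝ) (c : ℝ) (W : ℝ → ℝ → ℝ)
    (hXs : Xs.Nonempty) (hXt : Xt.Nonempty)
    (hπs_pos : ∀ x ∈ Xs, 0 < πs x) (hπs_sum : ∑ x ∈ Xs, πs x = 1)
    (hπt_pos : ∀ y ∈ Xt, 0 < πt y) (hπt_sum : ∑ y ∈ Xt, πt y = 1)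
    (hpts_nn : ∀ x ∈ Xs, 0 ≤ pts x) (hpts_sum : ∑ x ∈ Xs, pts x = 1)
    (hpts_nd : 1 < (Xs.filter fun x => pts x ≠ 0).card)
    (hptt_nn : ∀ y ∈ Xt, 0 ≤ ptt y) (hptt_sum : ∑ y ∈ Xt, ptt y = 1)
    (hptt_nd : 1 < (Xt.filter fun y => ptt y ≠ 0).card)
    (hW : ∀ x ∈ Xs, ∀ y ∈ Xt,
      W x y = πs x * πt y + zetaF Xs pts x * c * zetaF Xt ptt y)
    (hWnn : ∀ x ∈ Xs, ∀ y ∈ Xt, 0 ≤ W x y) :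
    ∀ x ∈ Xs, ∀ y ∈ Xt,
      -(sig2F Xs pts * sig2F Xt ptt * (πs x * πt y)) ≤
          pts x * ptt y * (x - muF Xs pts) * c * (y - muF Xt ptt) ∧
        pts x * ptt y * (x - muF Xs pts) * c * (y - muF Xt ptt) ≤
          sig2F Xs pts * sig2F Xt ptt * ((1 - πs x) * πt y) := by

  have hσs : 0 < sig2F Xs pts := sig2_pos Xs pts hpts_nn hpts_nd
  have hσt : 0 < sig2F Xt ptt := sig2_pos Xt ptt hptt_nn hptt_nd
  intro x hx y hy
  have hkey : pts x * ptt y * (x - muF Xs pts) * c * (y - muF Xt ptt)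
      = sig2F Xs pts * sig2F Xt ptt * (zetaF Xs pts x * c * zetaF Xt ptt y) := by
    unfold zetaF
    field_simp
  constructor
  · have h0 := hWnn x hx y hy
    rw [hW x hx y hy] at h0
    rw [hkey]
    nlinarith [mul_pos hσs hσt]
  · -- sum over x' of W x' y = πt y
    have hsumW : ∑ x' ∈ Xs, W x' y = πt y := by
      rw [Finset.sum_congr rfl fun x' hx' => hW x' hx' y hy]
      rw [Finset.sum_add_distrib, ← Finset.sum_mul, hπs_sum, one_mul]
      have : ∑ x' ∈ Xs, zetaF Xs pts x' * c * zetaF Xt ptt y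
          = (∑ x' ∈ Xs, zetaF Xs pts x') * (c * zetaF Xt ptt y) := by
        rw [Finset.sum_mul]; exact Finset.sum_congr rfl fun _ _ => mul_assoc _ _ _
      rw [this, zeta_sum Xs pts hpts_sum, zero_mul, add_zero]
    have hle : W x y ≤ πt y := by
      rw [← hsumW]
      exact Finset.single_le_sum (fun x' hx' => hWnn x' hx' y hy) hx
    rw [hW x hx y hy] at hle
    rw [hkey]
    nlinarith [mul_pos hσs hσt]
end
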